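/- arXiv:2006.08275 — 5 statements merged into one kernel-verified Lean document; each statement's English description precedes it below -/
import Mathlib

section
/- For every real δ ∈ (0, 1/2) and every real p > (2+8δ)/(3+2δ) there exists a constant C > 0 such that for every sequence (y_j)_{j≥1} of nonnegative real numbers, ∑_{i=1}^∞ i^{4δ} ( ∑_{j=1}^∞ y_j/(i^p + j^4) )² ≤ C² · ∑_{j=1}^∞ j^{4δ} y_j², where both sides are interpreted as sums in [0, ∞]. -/
open scoped ENNReal NNReal

/-!
By Cauchy–Schwarz in `j`, with the weight `j^{4δ}` split evenly between the two factors, the left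
side is at most `M · ∑_j j^{4δ} y_j²`, where `M = ∑_{i,j} i^{4δ} j^{-4δ} (i^p + j^4)^{-2}` is a
squared Hilbert–Schmidt norm. For `α ∈ [0, 2]` the interpolation
`(i^p + j^4)² ≥ i^{pα} j^{4(2-α)}` bounds the terms of `M` by `i^{4δ-pα} j^{4α-8-4δ}`, and the
hypotheses on `δ` and `p` provide an `α` that puts both exponents below `-1`.
-/

theorem ENNReal.tsum_mul_sq_le {ι : Type*} (f g : ι → ℝ≥0∞) :
    (∑' i, f i * g i) ^ 2 ≤ (∑' i, f i ^ 2) * ∑' i, g i ^ 2 := by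
  have hfin (s : Finset ι) : (∑ i ∈ s, f i * g i) ^ 2 ≤ (∑ i ∈ s, f i ^ 2) * ∑ i ∈ s, g i ^ 2 := by
    have h := ENNReal.inner_le_Lp_mul_Lq s f g Real.HolderConjugate.two_two
    simp only [ENNReal.rpow_two] at h
    calc (∑ i ∈ s, f i * g i) ^ 2
        ≤ ((∑ i ∈ s, f i ^ 2) ^ (1 / 2 : ℝ) * (∑ i ∈ s, g i ^ 2) ^ (1 / 2 : ℝ)) ^ 2 := by gcongr
      _ = (∑ i ∈ s, f i ^ 2) * ∑ i ∈ s, g i ^ 2 := by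
        rw [mul_pow, ← ENNReal.rpow_two, ← ENNReal.rpow_two, ← ENNReal.rpow_mul,
          ← ENNReal.rpow_mul]
        norm_num
  refine le_of_tendsto' (((ENNReal.continuous_pow 2).tendsto _).comp ENNReal.summable.hasSum)
    fun s => ?_
  exact (hfin s).trans (mul_le_mul' (ENNReal.sum_le_tsum s) (ENNReal.sum_le_tsum s))

theorem ENNReal.tsum_mul_sq_tsum_mul_le {ι κ : Type*} (v : ι → ℝ≥0∞) (K : ι → κ → ℝ≥0∞)
    {c : κ → ℝ≥0∞} (hc0 : ∀ j, c j ≠ 0) (hctop : ∀ j, c j ≠ ∞) (y : κ → ℝ≥0∞) :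
    ∑' i, v i * (∑' j, K i j * y j) ^ 2
      ≤ (∑' i, ∑' j, v i * (K i j / c j) ^ 2) * ∑' j, (c j * y j) ^ 2 := by
  have hK (i : ι) (j : κ) : K i j * y j = K i j / c j * (c j * y j) := by
    rw [← mul_assoc, ENNReal.div_mul_cancel (hc0 j) (hctop j)]
  calc ∑' i, v i * (∑' j, K i j * y j) ^ 2
      ≤ ∑' i, v i * ((∑' j, (K i j / c j) ^ 2) * ∑' j, (c j * y j) ^ 2) := by
        gcongr with i
        simp only [hK i]
        exact ENNReal.tsum_mul_sq_le _ _
    _ = _ := by simp only [← mul_assoc, ENNReal.tsum_mul_right, ENNReal.tsum_mul_left]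

theorem Real.rpow_mul_rpow_le_add_sq {a b α : ℝ} (ha : 0 ≤ a) (hb : 0 ≤ b) (hα0 : 0 ≤ α)
    (hα2 : α ≤ 2) : a ^ α * b ^ (2 - α) ≤ (a + b) ^ 2 :=
  calc a ^ α * b ^ (2 - α) ≤ (a + b) ^ α * (a + b) ^ (2 - α) := by
        gcongr <;> linarith
    _ = (a + b) ^ 2 := by
        rw [← Real.rpow_add' (by positivity) (by norm_num), add_sub_cancel, Real.rpow_two]

theorem kernel_le_rpow_mul_rpow {x y p δ α : ℝ} (hx : 0 < x) (hy : 0 < y) (hα0 : 0 ≤ α)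
    (hα2 : α ≤ 2) :
    x ^ (4 * δ) * ((x ^ p + y ^ 4)⁻¹ / y ^ (2 * δ)) ^ 2
      ≤ x ^ (4 * δ - p * α) * y ^ (4 * α - 8 - 4 * δ) := by
  have hD : x ^ (p * α) * y ^ (4 * (2 - α)) ≤ (x ^ p + y ^ 4) ^ 2 := by
    have := Real.rpow_mul_rpow_le_add_sq (a := x ^ p) (b := y ^ 4) (by positivity) (by positivity)
      hα0 hα2
    rwa [← Real.rpow_mul hx.le, ← Real.rpow_natCast_mul hy.le, Nat.cast_ofNat] at this
  have hy2 : (y ^ (2 * δ)) ^ 2 = y ^ (4 * δ) := by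
    rw [← Real.rpow_two, ← Real.rpow_mul hy.le]; ring_nf
  calc x ^ (4 * δ) * ((x ^ p + y ^ 4)⁻¹ / y ^ (2 * δ)) ^ 2
      = x ^ (4 * δ) / ((x ^ p + y ^ 4) ^ 2 * y ^ (4 * δ)) := by
        rw [div_pow, inv_pow, hy2]; field_simp
    _ ≤ x ^ (4 * δ) / (x ^ (p * α) * y ^ (4 * (2 - α)) * y ^ (4 * δ)) := by gcongr
    _ = x ^ (4 * δ - p * α) * y ^ (4 * α - 8 - 4 * δ) := by
        rw [Real.rpow_sub hx, show 4 * α - 8 - 4 * δ = -(4 * (2 - α) + 4 * δ) by ring,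
          Real.rpow_neg hy.le, Real.rpow_add hy]
        field_simp

theorem exists_kernel_exponent {δ p : ℝ} (hδ0 : 0 < δ) (hδ1 : δ < 1 / 2)
    (hp : (2 + 8 * δ) / (3 + 2 * δ) < p) :
    ∃ α : ℝ, 0 ≤ α ∧ α ≤ 2 ∧ 4 * δ - p * α < -1 ∧ 4 * α - 8 - 4 * δ < -1 := by
  have hp' : 2 + 8 * δ < p * (3 + 2 * δ) := (div_lt_iff₀ (by linarith)).mp hp
  have hp0 : 0 < p := by nlinarith
  have ha : (1 + 4 * δ) / p < (3 + 2 * δ) / 2 := by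
    rw [div_lt_div_iff₀ hp0 two_pos]; linarith
  -- the midpoint works because `(3 + 2δ)/2 ≤ min 2 ((7 + 4δ)/4)` when `δ < 1/2`
  refine ⟨((1 + 4 * δ) / p + (3 + 2 * δ) / 2) / 2, by positivity, by linarith, ?_, by linarith⟩
  have : 1 + 4 * δ < p * (((1 + 4 * δ) / p + (3 + 2 * δ) / 2) / 2) := by
    rw [← div_lt_iff₀' hp0]; linarith
  linarith

theorem tsum_ofReal_pnat_rpow_ne_top {s : ℝ} (hs : s < -1) :
    ∑' i : ℕ+, ENNReal.ofReal ((i : ℝ) ^ s) ≠ ∞ := by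
  have hsum : Summable fun i : ℕ+ => (i : ℝ) ^ s :=
    (Real.summable_nat_rpow.mpr hs).comp_injective PNat.coe_injective
  rw [← ENNReal.ofReal_tsum_of_nonneg (fun i => by positivity) hsum]
  exact ENNReal.ofReal_ne_top

theorem tsum_tsum_kernel_ne_top {δ p α : ℝ} (hα0 : 0 ≤ α) (hα2 : α ≤ 2)
    (hs : 4 * δ - p * α < -1) (ht : 4 * α - 8 - 4 * δ < -1) :
    ∑' i : ℕ+, ∑' j : ℕ+, ENNReal.ofReal ((i : ℝ) ^ (4 * δ)) *
      ((ENNReal.ofReal ((i : ℝ) ^ p + (j : ℝ) ^ 4))⁻¹ / ENNReal.ofReal ((j : ℝ) ^ (2 * δ))) ^ 2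
      ≠ ∞ := by
  refine ne_top_of_le_ne_top (b := ∑' i : ℕ+, ∑' j : ℕ+,
    ENNReal.ofReal ((i : ℝ) ^ (4 * δ - p * α)) * ENNReal.ofReal ((j : ℝ) ^ (4 * α - 8 - 4 * δ)))
    ?_ (ENNReal.tsum_le_tsum fun i => ENNReal.tsum_le_tsum fun j => ?_)
  · simp only [ENNReal.tsum_mul_left, ENNReal.tsum_mul_right]
    exact ENNReal.mul_ne_top (tsum_ofReal_pnat_rpow_ne_top hs) (tsum_ofReal_pnat_rpow_ne_top ht)
  · have hi : (0 : ℝ) < i := by exact_mod_cast i.pos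
    have hj : (0 : ℝ) < j := by exact_mod_cast j.pos
    rw [← ENNReal.ofReal_inv_of_pos (by positivity), ← ENNReal.ofReal_div_of_pos (by positivity),
      ← ENNReal.ofReal_pow (by positivity), ← ENNReal.ofReal_mul (by positivity),
      ← ENNReal.ofReal_mul (by positivity)]
    exact ENNReal.ofReal_le_ofReal (kernel_le_rpow_mul_rpow hi hj hα0 hα2)

/-- For every real `δ ∈ (0, 1/2)` and every real `p > (2+8δ)/(3+2δ)` there is `C > 0`
such that for every sequence `(y_j)_{j≥1}` of nonnegative reals,
`∑_i i^{4δ} (∑_j y_j/(i^p + j^4))² ≤ C² ∑_j j^{4δ} y_j²`, the sums taken in `[0,∞]`. -/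
theorem B_linear_growth_bound (δ p : ℝ) (hδ0 : 0 < δ) (hδ1 : δ < 1 / 2)
    (hp : (2 + 8 * δ) / (3 + 2 * δ) < p) :
    ∃ C : ℝ, 0 < C ∧ ∀ y : ℕ+ → ℝ≥0,
      ∑' i : ℕ+, ENNReal.ofReal ((i : ℝ) ^ (4 * δ)) *
          (∑' j : ℕ+, (y j : ℝ≥0∞) / ENNReal.ofReal ((i : ℝ) ^ p + (j : ℝ) ^ (4 : ℕ))) ^ 2
        ≤ ENNReal.ofReal (C ^ 2) *
          ∑' j : ℕ+, ENNReal.ofReal ((j : ℝ) ^ (4 * δ)) * (y j : ℝ≥0∞) ^ 2 := by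
  obtain ⟨α, hα0, hα2, hs, ht⟩ := exists_kernel_exponent hδ0 hδ1 hp
  set M := ∑' i : ℕ+, ∑' j : ℕ+, ENNReal.ofReal ((i : ℝ) ^ (4 * δ)) *
    ((ENNReal.ofReal ((i : ℝ) ^ p + (j : ℝ) ^ 4))⁻¹ / ENNReal.ofReal ((j : ℝ) ^ (2 * δ))) ^ 2
  have hM : M ≠ ∞ := tsum_tsum_kernel_ne_top hα0 hα2 hs ht
  refine ⟨√(M.toReal + 1), by positivity, fun y => ?_⟩
  have hMC : M ≤ ENNReal.ofReal (√(M.toReal + 1) ^ 2) := by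
    rw [Real.sq_sqrt (by positivity), ENNReal.ofReal_add ENNReal.toReal_nonneg zero_le_one,
      ENNReal.ofReal_toReal hM]
    exact le_self_add
  have hweight (j : ℕ+) : (ENNReal.ofReal ((j : ℝ) ^ (2 * δ)) * y j) ^ 2
      = ENNReal.ofReal ((j : ℝ) ^ (4 * δ)) * (y j : ℝ≥0∞) ^ 2 := by
    rw [mul_pow, ← ENNReal.ofReal_pow (by positivity), ← Real.rpow_natCast,
      ← Real.rpow_mul (by positivity)]
    ring_nf
  calc _ = ∑' i : ℕ+, ENNReal.ofReal ((i : ℝ) ^ (4 * δ)) *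
          (∑' j : ℕ+, (ENNReal.ofReal ((i : ℝ) ^ p + (j : ℝ) ^ 4))⁻¹ * y j) ^ 2 := by
        simp only [div_eq_mul_inv, mul_comm (y _ : ℝ≥0∞)]
    _ ≤ M * ∑' j : ℕ+, (ENNReal.ofReal ((j : ℝ) ^ (2 * δ)) * y j) ^ 2 :=
        ENNReal.tsum_mul_sq_tsum_mul_le _ _
          (fun j => (ENNReal.ofReal_pos.mpr (by positivity)).ne') (fun _ => ENNReal.ofReal_ne_top) _
    _ ≤ _ := by
        simp only [hweight]
        gcongr
end

section
/- For all real numbers p > 0, ρ_Q > 1, γ ≥ 0 and α with 0 < α < (7 + ρ_Q + 4γ)/(2ρ_Q), there exist ϑ ∈ (0, 1/2) and a constant C > 0 such that for every sequence (y_j)_{j≥1} of nonnegative real numbers, ∑_{i=1}^∞ ∑_{j=1}^∞ i^{−4ϑ} · j^{(2α−1)ρ_Q} · y_j² / (i^p + j^4)² ≤ C² · ∑_{j=1}^∞ j^{4γ} y_j², where both sides are interpreted as sums in [0, ∞]. -/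
open scoped ENNReal NNReal

/-! Weighted AM–GM with weights `1/8, 7/8` gives `i^{p/4} j^7 ≤ (i^p + j^4)²`, and the bound on `α`
gives `(2α − 1)ρ_Q < 4γ + 7`. Hence for `ϑ = 1/4` each term is at most `i^{−(1 + p/4)} · j^{4γ} y_j²`,
and the double sum factors into a convergent `p`-series in `i` times `∑_j j^{4γ} y_j²`. -/

section

open Real

lemma rpow_mul_rpow_one_sub_le_add {x y w : ℝ} (hx : 0 ≤ x) (hy : 0 ≤ y) (hw₀ : 0 ≤ w)
    (hw₁ : w ≤ 1) : x ^ w * y ^ (1 - w) ≤ x + y :=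
  calc x ^ w * y ^ (1 - w) ≤ w * x + (1 - w) * y :=
        geom_mean_le_arith_mean2_weighted hw₀ (by linarith) hx hy (by ring)
    _ ≤ x + y := by nlinarith

lemma rpow_div_four_mul_rpow_seven_le_sq_add {a b : ℝ} (ha : 0 ≤ a) (hb : 0 ≤ b) (p : ℝ) :
    a ^ (p / 4) * b ^ (7 : ℝ) ≤ (a ^ p + b ^ 4) ^ 2 := by
  have amgm := rpow_mul_rpow_one_sub_le_add (rpow_nonneg ha p) (pow_nonneg hb 4)
    (w := 1 / 8) (by norm_num) (by norm_num)
  have hlhs : (a ^ p) ^ (1 / 8 : ℝ) * (b ^ 4) ^ (1 - 1 / 8 : ℝ) =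
      a ^ (p / 8) * b ^ (7 / 2 : ℝ) := by
    rw [← rpow_natCast b 4, ← rpow_mul ha, ← rpow_mul hb]
    norm_num [div_eq_mul_inv]
  calc a ^ (p / 4) * b ^ (7 : ℝ) = (a ^ (p / 8) * b ^ (7 / 2 : ℝ)) ^ 2 := by
        rw [mul_pow, ← rpow_mul_natCast ha, ← rpow_mul_natCast hb]
        norm_num [div_eq_mul_inv, mul_assoc]
    _ ≤ (a ^ p + b ^ 4) ^ 2 := by
        rw [← hlhs]
        exact pow_le_pow_left₀ (by positivity) amgm 2

lemma rpow_neg_mul_rpow_le_mul_sq_add {a b t p e g : ℝ} (ha : 0 < a) (hb : 1 ≤ b)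
    (he : e ≤ g + 7) :
    a ^ (-t) * b ^ e ≤ a ^ (-(t + p / 4)) * b ^ g * (a ^ p + b ^ 4) ^ 2 := by
  have hsplit_a : a ^ (-t) = a ^ (-(t + p / 4)) * a ^ (p / 4) := by
    rw [← rpow_add ha, neg_add, neg_add_cancel_right]
  have hsplit_b : b ^ (g + 7) = b ^ g * b ^ (7 : ℝ) := rpow_add (by linarith) g 7
  calc a ^ (-t) * b ^ e ≤ a ^ (-t) * b ^ (g + 7) := by gcongr
    _ = a ^ (-(t + p / 4)) * b ^ g * (a ^ (p / 4) * b ^ (7 : ℝ)) := by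
        rw [hsplit_a, hsplit_b]; ring
    _ ≤ a ^ (-(t + p / 4)) * b ^ g * (a ^ p + b ^ 4) ^ 2 := by
        gcongr
        exact rpow_div_four_mul_rpow_seven_le_sq_add ha.le (by linarith) p

end

lemma ENNReal.ofReal_mul_div_ofReal_le {a b c : ℝ} (hb : 0 < b) (h : a ≤ c * b) (t : ℝ≥0∞) :
    ENNReal.ofReal a * t / ENNReal.ofReal b ≤ ENNReal.ofReal c * t := by
  rw [ENNReal.mul_div_right_comm, ← ENNReal.ofReal_div_of_pos hb]
  gcongr
  exact (div_le_iff₀ hb).2 h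

lemma ENNReal.tsum_tsum_le_tsum_mul_tsum {α β : Type*} {f : α → β → ℝ≥0∞} {g : α → ℝ≥0∞}
    {h : β → ℝ≥0∞} (hf : ∀ i j, f i j ≤ g i * h j) :
    ∑' i, ∑' j, f i j ≤ (∑' i, g i) * ∑' j, h j :=
  calc ∑' i, ∑' j, f i j ≤ ∑' i, ∑' j, g i * h j :=
        ENNReal.tsum_le_tsum fun i => ENNReal.tsum_le_tsum (hf i)
    _ = (∑' i, g i) * ∑' j, h j := by
        simp_rw [ENNReal.tsum_mul_left, ENNReal.tsum_mul_right]

lemma ENNReal.tsum_pnat_ofReal_rpow_neg_ne_top {s : ℝ} (hs : 1 < s) :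
    ∑' i : ℕ+, ENNReal.ofReal ((i : ℝ) ^ (-s)) ≠ ∞ := by
  have hsum : Summable fun i : ℕ+ => (i : ℝ) ^ (-s) :=
    (Real.summable_nat_rpow.mpr (by linarith)).comp_injective PNat.coe_injective
  rw [← ENNReal.ofReal_tsum_of_nonneg (fun i => by positivity) hsum]
  exact ENNReal.ofReal_ne_top

theorem B_HS_bound_general (p ρQ γ α : ℝ) (hp : 0 < p) (hρQ : 1 < ρQ)
    (hα1 : α < (7 + ρQ + 4 * γ) / (2 * ρQ)) :
    ∃ ϑ : ℝ, 0 < ϑ ∧ ϑ < 1 / 2 ∧ ∃ C : ℝ, 0 < C ∧ ∀ y : ℕ+ → ℝ≥0,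
      ∑' i : ℕ+, ∑' j : ℕ+,
          ENNReal.ofReal ((i : ℝ) ^ (-(4 * ϑ)) * (j : ℝ) ^ ((2 * α - 1) * ρQ)) *
            (y j : ℝ≥0∞) ^ 2 / ENNReal.ofReal (((i : ℝ) ^ p + (j : ℝ) ^ (4 : ℕ)) ^ 2)
        ≤ ENNReal.ofReal (C ^ 2) *
          ∑' j : ℕ+, ENNReal.ofReal ((j : ℝ) ^ (4 * γ)) * (y j : ℝ≥0∞) ^ 2 := by
  set s : ℝ := 4 * (1 / 4) + p / 4
  set S : ℝ≥0∞ := ∑' i : ℕ+, ENNReal.ofReal ((i : ℝ) ^ (-s))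
  have hS : S ≠ ∞ := ENNReal.tsum_pnat_ofReal_rpow_neg_ne_top (by simp only [s]; linarith)
  have he : (2 * α - 1) * ρQ ≤ 4 * γ + 7 := by
    have := (lt_div_iff₀ (by linarith : 0 < 2 * ρQ)).mp hα1
    nlinarith
  refine ⟨1 / 4, by norm_num, by norm_num, √(S.toReal + 1), by positivity, fun y => ?_⟩
  have hS_le : S ≤ ENNReal.ofReal (√(S.toReal + 1) ^ 2) := by
    rw [ENNReal.le_ofReal_iff_toReal_le hS (by positivity), Real.sq_sqrt (by positivity)]
    linarith
  refine (ENNReal.tsum_tsum_le_tsum_mul_tsum fun (i j : ℕ+) => ?_).trans (by gcongr)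
  have hi : (0 : ℝ) < i := by exact_mod_cast i.pos
  have hj : (1 : ℝ) ≤ j := by exact_mod_cast (one_le : 1 ≤ j)
  rw [← mul_assoc, ← ENNReal.ofReal_mul (by positivity)]
  exact ENNReal.ofReal_mul_div_ofReal_le (by positivity)
    (rpow_neg_mul_rpow_le_mul_sq_add hi hj he) _

/-- For all real `p > 0`, `ρ_Q > 1`, `γ ≥ 0` and `α` with `0 < α < (7+ρ_Q+4γ)/(2ρ_Q)`,
there exist `ϑ ∈ (0, 1/2)` and `C > 0` such that for every sequence `(y_j)_{j≥1}` of
nonnegative reals,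
`∑_i ∑_j i^{−4ϑ} j^{(2α−1)ρ_Q} y_j² / (i^p + j^4)² ≤ C² ∑_j j^{4γ} y_j²`,
the sums taken in `[0,∞]`. -/
theorem B_HS_bound (p ρQ γ α : ℝ) (hp : 0 < p) (hρQ : 1 < ρQ) (hγ : 0 ≤ γ)
    (hα0 : 0 < α) (hα1 : α < (7 + ρQ + 4 * γ) / (2 * ρQ)) :
    ∃ ϑ : ℝ, 0 < ϑ ∧ ϑ < 1 / 2 ∧ ∃ C : ℝ, 0 < C ∧ ∀ y : ℕ+ → ℝ≥0,
      ∑' i : ℕ+, ∑' j : ℕ+,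
          ENNReal.ofReal ((i : ℝ) ^ (-(4 * ϑ)) * (j : ℝ) ^ ((2 * α - 1) * ρQ)) *
            (y j : ℝ≥0∞) ^ 2 / ENNReal.ofReal (((i : ℝ) ^ p + (j : ℝ) ^ (4 : ℕ)) ^ 2)
        ≤ ENNReal.ofReal (C ^ 2) *
          ∑' j : ℕ+, ENNReal.ofReal ((j : ℝ) ^ (4 * γ)) * (y j : ℝ≥0∞) ^ 2 :=
  B_HS_bound_general p ρQ γ α hp hρQ hα1
end

section
/- Let a, b, q > 0 and c̄ ≥ 1 be real numbers. For all real numbers M, N, K > 0 with M·N·K ≤ c̄, one has N^{−a} + K^{−b} + M^{−q} ≥ c̄^{−abq/(aq+bq+ab)}. -/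
/-! With weights `e/a, e/b, e/q` (`e` the effective order), which sum to one, weighted AM–GM
bounds `(N^{-a})^{e/a} (K^{-b})^{e/b} (M^{-q})^{e/q} = (MNK)^{-e} ≥ c^{-e}` by a convex
combination of the three error terms, hence by their sum. -/

theorem geom_mean_weighted_le_add3 {w₁ w₂ w₃ p₁ p₂ p₃ : ℝ} (hw₁ : 0 ≤ w₁) (hw₂ : 0 ≤ w₂)
    (hw₃ : 0 ≤ w₃) (hp₁ : 0 ≤ p₁) (hp₂ : 0 ≤ p₂) (hp₃ : 0 ≤ p₃) (hw : w₁ + w₂ + w₃ = 1) :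
    p₁ ^ w₁ * p₂ ^ w₂ * p₃ ^ w₃ ≤ p₁ + p₂ + p₃ :=
  calc p₁ ^ w₁ * p₂ ^ w₂ * p₃ ^ w₃ ≤ w₁ * p₁ + w₂ * p₂ + w₃ * p₃ :=
        Real.geom_mean_le_arith_mean3_weighted hw₁ hw₂ hw₃ hp₁ hp₂ hp₃ hw
    _ ≤ p₁ + p₂ + p₃ := by
        gcongr
        · exact mul_le_of_le_one_left hp₁ (by linarith)
        · exact mul_le_of_le_one_left hp₂ (by linarith)
        · exact mul_le_of_le_one_left hp₃ (by linarith)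

theorem Real.rpow_neg_rpow_div {x : ℝ} (hx : 0 ≤ x) {a : ℝ} (ha : a ≠ 0) (e : ℝ) :
    (x ^ (-a)) ^ (e / a) = x ^ (-e) := by
  rw [← Real.rpow_mul hx]
  congr 1
  field_simp

theorem div_add_div_add_div_eq_one {a b q : ℝ} (ha : 0 < a) (hb : 0 < b) (hq : 0 < q) :
    let e := a * b * q / (a * q + b * q + a * b)
    e / a + e / b + e / q = 1 := by
  have hD : a * q + b * q + a * b ≠ 0 := by positivity
  field_simp
  ring

theorem eoc_lower_bound_MNK_general (a b q c : ℝ) (ha : 0 < a) (hb : 0 < b) (hq : 0 < q)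
    (M N K : ℝ) (hM : 0 < M) (hN : 0 < N) (hK : 0 < K)
    (hcost : M * N * K ≤ c) :
    c ^ (-(a * b * q / (a * q + b * q + a * b))) ≤ N ^ (-a) + K ^ (-b) + M ^ (-q) := by
  set e := a * b * q / (a * q + b * q + a * b)
  have he : 0 ≤ e := by positivity
  calc c ^ (-e) ≤ (M * N * K) ^ (-e) :=
        Real.rpow_le_rpow_of_nonpos (by positivity) hcost (neg_nonpos.mpr he)
    _ = (N ^ (-a)) ^ (e / a) * (K ^ (-b)) ^ (e / b) * (M ^ (-q)) ^ (e / q) := by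
        rw [Real.rpow_neg_rpow_div hN.le ha.ne', Real.rpow_neg_rpow_div hK.le hb.ne',
          Real.rpow_neg_rpow_div hM.le hq.ne', Real.mul_rpow (by positivity) hK.le,
          Real.mul_rpow hM.le hN.le]
        ring
    _ ≤ N ^ (-a) + K ^ (-b) + M ^ (-q) :=
        geom_mean_weighted_le_add3 (by positivity) (by positivity) (by positivity)
          (by positivity) (by positivity) (by positivity) (div_add_div_add_div_eq_one ha hb hq)

/-- Let `a, b, q > 0` and `c̄ ≥ 1`. For all `M, N, K > 0` with `M·N·K ≤ c̄`, one has
`N^{−a} + K^{−b} + M^{−q} ≥ c̄^{−abq/(aq+bq+ab)}`. -/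
theorem eoc_lower_bound_MNK (a b q c : ℝ) (ha : 0 < a) (hb : 0 < b) (hq : 0 < q)
    (hc : 1 ≤ c) (M N K : ℝ) (hM : 0 < M) (hN : 0 < N) (hK : 0 < K)
    (hcost : M * N * K ≤ c) :
    c ^ (-(a * b * q / (a * q + b * q + a * b))) ≤ N ^ (-a) + K ^ (-b) + M ^ (-q) :=
  eoc_lower_bound_MNK_general a b q c ha hb hq M N K hM hN hK hcost
end

section
/- Let a, b, q > 0 and c̄ ≥ 1 be real numbers. For all real numbers M, N, K > 0 with M·N²·K ≤ c̄, one has N^{−a} + K^{−b} + M^{−q} ≥ c̄^{−abq/(aq+2bq+ab)}. -/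
/-!
Put `E = N^{-a} + K^{-b} + M^{-q}`. Each summand is at most `E`, which inverts to
`N ≥ E^{-1/a}`, `K ≥ E^{-1/b}`, `M ≥ E^{-1/q}`; hence `c ≥ M N² K ≥ E^{-(2/a + 1/b + 1/q)}`,
and solving for `E` gives `E ≥ c^{-1/(2/a + 1/b + 1/q)} = c^{-abq/(aq+2bq+ab)}`.
-/

open Real

lemma rpow_le_mul_sq_mul_of_rpow_neg_le {a b q E M N K : ℝ} (ha : 0 < a) (hb : 0 < b)
    (hq : 0 < q) (hM : 0 < M) (hN : 0 < N) (hK : 0 < K) (hNE : N ^ (-a) ≤ E)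
    (hKE : K ^ (-b) ≤ E) (hME : M ^ (-q) ≤ E) :
    E ^ ((-q)⁻¹ + (-a)⁻¹ * 2 + (-b)⁻¹) ≤ M * N ^ 2 * K := by
  have hE : 0 < E := (rpow_pos_of_pos hN _).trans_le hNE
  have hEN : E ^ (-a)⁻¹ ≤ N := (rpow_inv_le_iff_of_neg hE hN (neg_neg_of_pos ha)).2 hNE
  have hEK : E ^ (-b)⁻¹ ≤ K := (rpow_inv_le_iff_of_neg hE hK (neg_neg_of_pos hb)).2 hKE
  have hEM : E ^ (-q)⁻¹ ≤ M := (rpow_inv_le_iff_of_neg hE hM (neg_neg_of_pos hq)).2 hME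
  calc E ^ ((-q)⁻¹ + (-a)⁻¹ * 2 + (-b)⁻¹)
      = E ^ (-q)⁻¹ * (E ^ (-a)⁻¹) ^ 2 * E ^ (-b)⁻¹ := by
        rw [rpow_add hE, rpow_add hE, ← rpow_mul_natCast hE.le, Nat.cast_ofNat]
    _ ≤ M * N ^ 2 * K := by gcongr

theorem eoc_lower_bound_MN2K_general (a b q c : ℝ) (ha : 0 < a) (hb : 0 < b) (hq : 0 < q)
    (M N K : ℝ) (hM : 0 < M) (hN : 0 < N) (hK : 0 < K)
    (hcost : M * N ^ (2 : ℕ) * K ≤ c) :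
    c ^ (-(a * b * q / (a * q + 2 * b * q + a * b))) ≤ N ^ (-a) + K ^ (-b) + M ^ (-q) := by
  have hNa : 0 < N ^ (-a) := rpow_pos_of_pos hN _
  have hKb : 0 < K ^ (-b) := rpow_pos_of_pos hK _
  have hMq : 0 < M ^ (-q) := rpow_pos_of_pos hM _
  have hc : 0 < c := (by positivity : 0 < M * N ^ 2 * K).trans_le hcost
  have hEc : (N ^ (-a) + K ^ (-b) + M ^ (-q)) ^ ((-q)⁻¹ + (-a)⁻¹ * 2 + (-b)⁻¹) ≤ c :=
    (rpow_le_mul_sq_mul_of_rpow_neg_le ha hb hq hM hN hK (by linarith) (by linarith)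
      (by linarith)).trans hcost
  have ht : (-q)⁻¹ + (-a)⁻¹ * 2 + (-b)⁻¹ < 0 := by
    simp only [inv_neg]
    linarith [inv_pos.2 ha, inv_pos.2 hb, inv_pos.2 hq]
  have hexp : ((-q)⁻¹ + (-a)⁻¹ * 2 + (-b)⁻¹)⁻¹ = -(a * b * q / (a * q + 2 * b * q + a * b)) := by
    rw [← inv_div, ← inv_neg, inv_inj]
    field_simp
    ring
  rw [← hexp]
  exact (rpow_inv_le_iff_of_neg hc (by positivity) ht).2 hEc

/-- Let `a, b, q > 0` and `c̄ ≥ 1`. For all `M, N, K > 0` with `M·N²·K ≤ c̄`, one has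
`N^{−a} + K^{−b} + M^{−q} ≥ c̄^{−abq/(aq+2bq+ab)}`. -/
theorem eoc_lower_bound_MN2K (a b q c : ℝ) (ha : 0 < a) (hb : 0 < b) (hq : 0 < q)
    (hc : 1 ≤ c) (M N K : ℝ) (hM : 0 < M) (hN : 0 < N) (hK : 0 < K)
    (hcost : M * N ^ (2 : ℕ) * K ≤ c) :
    c ^ (-(a * b * q / (a * q + 2 * b * q + a * b))) ≤ N ^ (-a) + K ^ (-b) + M ^ (-q) :=
  eoc_lower_bound_MN2K_general a b q c ha hb hq M N K hM hN hK hcost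
end

section
/- Let b, q > 0 and c̄ ≥ 1 be real numbers. For all real numbers M, K > 0 with K·M^{2q} ≤ c̄, one has K^{−b} + M^{−q} ≥ c̄^{−b/(2b+1)}. -/
/-! With `u = K^{-b}` and `v = M^{-q}` the cost constraint reads `u · v^{2b} ≥ c^{-b}`. Hence
`max u v ^ (2b+1) ≥ c^{-b}`, so `u + v ≥ max u v ≥ c^{-b/(2b+1)}`. -/

namespace Real

theorem rpow_inv_one_add_le_max_of_le_mul_rpow {s u v p : ℝ} (hs : 0 ≤ s) (hu : 0 ≤ u)
    (hv : 0 ≤ v) (hp : 0 ≤ p) (h : s ≤ u * v ^ p) : s ^ (1 + p)⁻¹ ≤ max u v := by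
  have hmax : 0 ≤ max u v := le_max_of_le_left hu
  have hpow : s ≤ max u v ^ (1 + p) :=
    calc s ≤ u * v ^ p := h
      _ ≤ max u v * max u v ^ p := by gcongr <;> simp
      _ = max u v ^ (1 + p) := by
        rw [rpow_add' hmax (by linarith), rpow_one]
  calc s ^ (1 + p)⁻¹ ≤ (max u v ^ (1 + p)) ^ (1 + p)⁻¹ :=
        rpow_le_rpow hs hpow (by positivity)
    _ = max u v := rpow_rpow_inv hmax (by linarith)

theorem mul_rpow_two_mul_rpow_neg {K M b q : ℝ} (hK : 0 ≤ K) (hM : 0 ≤ M) :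
    (K * M ^ (2 * q)) ^ (-b) = K ^ (-b) * (M ^ (-q)) ^ (2 * b) := by
  rw [mul_rpow hK (rpow_nonneg hM _), ← rpow_mul hM, ← rpow_mul hM]
  ring_nf

end Real

theorem eoc_lower_bound_KM2q_general (b q c : ℝ) (hb : 0 < b)
    (M K : ℝ) (hM : 0 < M) (hK : 0 < K) (hcost : K * M ^ (2 * q) ≤ c) :
    c ^ (-(b / (2 * b + 1))) ≤ K ^ (-b) + M ^ (-q) := by
  have hcost_pos : 0 < K * M ^ (2 * q) := by positivity
  have hc : 0 < c := hcost_pos.trans_le hcost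
  have hproduct : c ^ (-b) ≤ K ^ (-b) * (M ^ (-q)) ^ (2 * b) := by
    rw [← Real.mul_rpow_two_mul_rpow_neg hK.le hM.le]
    exact Real.rpow_le_rpow_of_nonpos hcost_pos hcost (by linarith)
  have hexp : c ^ (-(b / (2 * b + 1))) = (c ^ (-b)) ^ (1 + 2 * b)⁻¹ := by
    rw [← Real.rpow_mul hc.le]
    congr 1
    field_simp
    ring
  calc c ^ (-(b / (2 * b + 1))) ≤ max (K ^ (-b)) (M ^ (-q)) := by
        rw [hexp]
        exact Real.rpow_inv_one_add_le_max_of_le_mul_rpow (by positivity) (by positivity)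
          (by positivity) (by linarith) hproduct
    _ ≤ K ^ (-b) + M ^ (-q) :=
        max_le_add_of_nonneg (by positivity) (by positivity)

/-- Let `b, q > 0` and `c̄ ≥ 1`. For all `M, K > 0` with `K·M^{2q} ≤ c̄`, one has
`K^{−b} + M^{−q} ≥ c̄^{−b/(2b+1)}`. -/
theorem eoc_lower_bound_KM2q (b q c : ℝ) (hb : 0 < b) (hq : 0 < q) (hc : 1 ≤ c)
    (M K : ℝ) (hM : 0 < M) (hK : 0 < K) (hcost : K * M ^ (2 * q) ≤ c) :
    c ^ (-(b / (2 * b + 1))) ≤ K ^ (-b) + M ^ (-q) :=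
  eoc_lower_bound_KM2q_general b q c hb M K hM hK hcost
end
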